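/- Let V : ℝ → ℝ be a positive C² function satisfying V''(t) = V(t)·U(t)² where U(t) ≥ ψ₀ t / 2 for all t ≥ T₀ (with ψ₀ > 0, T₀ > 0), and suppose V is bounded on [T₀, ∞). Then there exist constants C, c > 0 such that V(t) ≤ C e^{-c t²} for all t ≥ T₀. -/

import Mathlib

/-!
Put `b = ψ₀ / 4`, so that `V'' ≥ (2 b t)² V` on `[T₀, ∞)`. Then `V` is convex and bounded
there, hence nonincreasing. The function `F = V' + 2 b t V` satisfies
`F' - 2 b t F = V'' + 2 b V - 4 b² t² V ≥ 0`, so `F e^{-b t²}` is nondecreasing; since `V' ≤ 0`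
it is at most `2 b M t e^{-b t²} → 0`, hence `F ≤ 0`. But `F e^{b t²}` is the derivative of
`V e^{b t²}`, which is therefore nonincreasing.
-/

open Real Set Filter Topology

theorem MonotoneOn.le_of_tendsto_of_eventually_le {α β : Type*} [SemilatticeSup α] [Nonempty α]
    [TopologicalSpace β] [Preorder β] [OrderClosedTopology β] {g h : α → β} {T t : α} {l : β}
    (hg : MonotoneOn g (Ici T)) (hgh : ∀ᶠ s in atTop, g s ≤ h s) (hh : Tendsto h atTop (𝓝 l))
    (ht : T ≤ t) : g t ≤ l :=
  ge_of_tendsto hh <| (hgh.and (eventually_ge_atTop t)).mono fun _ ⟨hs, hts⟩ =>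
    (hg ht (ht.trans hts) hts).trans hs

theorem tendsto_mul_exp_neg_mul_sq_atTop {b : ℝ} (hb : 0 < b) :
    Tendsto (fun t : ℝ => t * exp (-b * t ^ 2)) atTop (𝓝 0) := by
  refine ((tendsto_rpow_abs_mul_exp_neg_mul_sq_cocompact hb 1).mono_left
    atTop_le_cocompact).congr' ?_
  filter_upwards [eventually_ge_atTop 0] with t ht
  rw [rpow_one, abs_of_nonneg ht]

theorem ConvexOn.le_zero_of_hasDerivAt_of_le {f : ℝ → ℝ} {f' T M x : ℝ}
    (hf : ConvexOn ℝ (Ici T) f) (hM : ∀ t ≥ T, f t ≤ M) (hx : T ≤ x) (hfx : HasDerivAt f f' x) :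
    f' ≤ 0 := by
  by_contra! hpos
  set y := x + (M - f x) / f' + 1
  have hxy : x < y := by
    have : 0 ≤ (M - f x) / f' := div_nonneg (sub_nonneg.2 (hM x hx)) hpos.le
    linarith
  have hslope := hf.le_slope_of_hasDerivAt hx (hx.trans hxy.le) hxy hfx
  rw [slope_def_field, le_div_iff₀ (sub_pos.2 hxy)] at hslope
  have hy : f' * (y - x) = M - f x + f' := by
    simp only [y]
    field_simp
    ring
  linarith [hM y (hx.trans hxy.le)]

theorem HasDerivAt.mul_exp_mul_sq {f : ℝ → ℝ} {f' b t : ℝ} (hf : HasDerivAt f f' t) :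
    HasDerivAt (fun s => f s * Real.exp (b * s ^ 2))
      ((f' + 2 * b * t * f t) * Real.exp (b * t ^ 2)) t := by
  have hw : HasDerivAt (fun s => b * s ^ 2) (2 * b * t) t :=
    ((hasDerivAt_pow 2 t).const_mul b).congr_deriv (by push_cast; ring)
  exact (hf.mul hw.exp).congr_deriv (by ring)

section GaussianWeight

variable {f f' : ℝ → ℝ} {b T : ℝ}

theorem monotoneOn_mul_exp_mul_sq (hf : ∀ t ≥ T, HasDerivAt f (f' t) t)
    (h : ∀ t ≥ T, 0 ≤ f' t + 2 * b * t * f t) :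
    MonotoneOn (fun s => f s * exp (b * s ^ 2)) (Ici T) := by
  refine monotoneOn_of_hasDerivWithinAt_nonneg (f' := fun t => (f' t + 2 * b * t * f t) *
    exp (b * t ^ 2)) (convex_Ici T)
    (fun t ht => (hf t ht).mul_exp_mul_sq.continuousAt.continuousWithinAt)
    (fun t ht => ?_) fun t ht => ?_
  · rw [interior_Ici] at ht
    exact (hf t ht.le).mul_exp_mul_sq.hasDerivWithinAt
  · rw [interior_Ici] at ht
    exact mul_nonneg (h t ht.le) (exp_pos _).le

theorem antitoneOn_mul_exp_mul_sq (hf : ∀ t ≥ T, HasDerivAt f (f' t) t)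
    (h : ∀ t ≥ T, f' t + 2 * b * t * f t ≤ 0) :
    AntitoneOn (fun s => f s * exp (b * s ^ 2)) (Ici T) := by
  refine antitoneOn_of_hasDerivWithinAt_nonpos (f' := fun t => (f' t + 2 * b * t * f t) *
    exp (b * t ^ 2)) (convex_Ici T)
    (fun t ht => (hf t ht).mul_exp_mul_sq.continuousAt.continuousWithinAt)
    (fun t ht => ?_) fun t ht => ?_
  · rw [interior_Ici] at ht
    exact (hf t ht.le).mul_exp_mul_sq.hasDerivWithinAt
  · rw [interior_Ici] at ht
    exact mul_nonpos_of_nonpos_of_nonneg (h t ht.le) (exp_pos _).le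

end GaussianWeight

section GaussianDecay

variable {V V' V'' : ℝ → ℝ} {b T M : ℝ}

theorem deriv_add_mul_nonpos_of_sq_mul_le_deriv2 (hb : 0 < b)
    (hV : ∀ t, HasDerivAt V (V' t) t) (hV' : ∀ t, HasDerivAt V' (V'' t) t)
    (hV0 : ∀ t ≥ T, 0 ≤ V t) (hM : ∀ t ≥ T, V t ≤ M)
    (hV'' : ∀ t ≥ T, (2 * b * t) ^ 2 * V t ≤ V'' t) {t : ℝ} (ht : T ≤ t) :
    V' t + 2 * b * t * V t ≤ 0 := by
  have hconvex : ConvexOn ℝ (Ici T) V :=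
    convexOn_of_hasDerivWithinAt2_nonneg (convex_Ici T)
      (fun t _ => (hV t).continuousAt.continuousWithinAt) (fun t _ => (hV t).hasDerivWithinAt)
      (fun t _ => (hV' t).hasDerivWithinAt) fun t ht => by
        rw [interior_Ici] at ht
        exact (mul_nonneg (sq_nonneg _) (hV0 t ht.le)).trans (hV'' t ht.le)
  set F := fun t => V' t + 2 * b * t * V t
  have hF : ∀ t, HasDerivAt F (V'' t + 2 * b * V t + 2 * b * t * V' t) t := fun t =>
    ((hV' t).add (((hasDerivAt_id t).const_mul (2 * b)).mul (hV t))).congr_deriv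
      (by simp only [id, mul_one]; ring)
  have hG : MonotoneOn (fun s => F s * exp (-b * s ^ 2)) (Ici T) :=
    monotoneOn_mul_exp_mul_sq (fun t _ => hF t) fun t ht => by
      have hexpand : V'' t + 2 * b * V t + 2 * b * t * V' t + 2 * -b * t * F t
          = V'' t - (2 * b * t) ^ 2 * V t + 2 * b * V t := by ring
      linarith [hV'' t ht, mul_nonneg hb.le (hV0 t ht)]
  have hGle : ∀ᶠ s in atTop, F s * exp (-b * s ^ 2) ≤ 2 * b * M * (s * exp (-b * s ^ 2)) := by
    filter_upwards [eventually_ge_atTop (max T 0)] with s hs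
    have hsT : T ≤ s := le_of_max_le_left hs
    have hs0 : 0 ≤ s := le_of_max_le_right hs
    have hFs : F s ≤ 2 * b * s * M := by
      have := mul_le_mul_of_nonneg_left (hM s hsT) (by positivity : 0 ≤ 2 * b * s)
      linarith [hconvex.le_zero_of_hasDerivAt_of_le hM hsT (hV s)]
    calc F s * exp (-b * s ^ 2) ≤ 2 * b * s * M * exp (-b * s ^ 2) := by gcongr
      _ = 2 * b * M * (s * exp (-b * s ^ 2)) := by ring
  have hG0 := hG.le_of_tendsto_of_eventually_le hGle
    ((tendsto_mul_exp_neg_mul_sq_atTop hb).const_mul _) ht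
  rw [mul_zero] at hG0
  exact nonpos_of_mul_nonpos_left hG0 (exp_pos _)

theorem antitoneOn_mul_exp_mul_sq_of_sq_mul_le_deriv2 (hb : 0 < b)
    (hV : ∀ t, HasDerivAt V (V' t) t) (hV' : ∀ t, HasDerivAt V' (V'' t) t)
    (hV0 : ∀ t ≥ T, 0 ≤ V t) (hM : ∀ t ≥ T, V t ≤ M)
    (hV'' : ∀ t ≥ T, (2 * b * t) ^ 2 * V t ≤ V'' t) :
    AntitoneOn (fun t => V t * exp (b * t ^ 2)) (Ici T) :=
  antitoneOn_mul_exp_mul_sq (fun t _ => hV t) fun _ ht =>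
    deriv_add_mul_nonpos_of_sq_mul_le_deriv2 hb hV hV' hV0 hM hV'' ht

end GaussianDecay

theorem stmt_11 (U V : ℝ → ℝ) (ψ₀ T₀ : ℝ) (hψ₀ : 0 < ψ₀) (hT₀ : 0 < T₀)
    (hV : ContDiff ℝ 2 V)
    (hVpos : ∀ t, 0 < V t)
    (hVbd : ∃ M, ∀ t ≥ T₀, V t ≤ M)
    (hVeq : ∀ t ≥ T₀, deriv (deriv V) t = V t * (U t) ^ 2)
    (hUlow : ∀ t ≥ T₀, ψ₀ * t / 2 ≤ U t) :
    ∃ C > 0, ∃ c > 0, ∀ t ≥ T₀, V t ≤ C * Real.exp (-c * t ^ 2) := by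
  obtain ⟨M, hM⟩ := hVbd
  set b := ψ₀ / 4 with hb_def
  have hb : 0 < b := by positivity
  have hV' : ContDiff ℝ 1 (deriv V) := (contDiff_succ_iff_deriv (n := 1)).mp hV |>.2.2
  have hweight : ∀ t ≥ T₀, (2 * b * t) ^ 2 * V t ≤ deriv (deriv V) t := fun t ht => by
    have hbt : 2 * b * t = ψ₀ * t / 2 := by rw [hb_def]; ring
    have hU : 2 * b * t ≤ U t := hbt ▸ hUlow t ht
    have ht0 : 0 ≤ t := hT₀.le.trans ht
    rw [hVeq t ht, mul_comm]
    gcongr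
    exact (hVpos t).le
  have hanti := antitoneOn_mul_exp_mul_sq_of_sq_mul_le_deriv2 hb
    (fun t => (hV.differentiable two_ne_zero t).hasDerivAt)
    (fun t => (hV'.differentiable one_ne_zero t).hasDerivAt) (fun t _ => (hVpos t).le) hM hweight
  refine ⟨V T₀ * exp (b * T₀ ^ 2), mul_pos (hVpos T₀) (exp_pos _), b, hb, fun t ht => ?_⟩
  rw [neg_mul, exp_neg, ← div_eq_mul_inv, le_div_iff₀ (exp_pos _)]
  exact hanti (mem_Ici.2 le_rfl) ht ht
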